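/- Let ν: ℝ → ℝ be smooth with |ν^{(k)}(y)| ≤ D k!/(ρ+ε|y|)^k for all y and k ≥ 1 (constants D,ρ,ε > 0), and let α, m ∈ ℝ with α > 0. Define ñ(t,x) := ν(m + e^{-αt}x) for (t,x) ∈ [0,1]×ℝ. Then for each k ≥ 1 there are constants M, L > 0 (independent of t,x) such that sup_x |∂ᵏñ/∂tᵏ(t,x)| ≤ M k!/Lᵏ for all t ∈ (0,1); in particular t ↦ ñ(t,·) is analytic as a map of (0,1) into the bounded continuous functions on ℝ. -/

import Mathlib

open Set

lemma coeff_eq_iteratedDeriv' {f : ℝ → ℝ} {p : FormalMultilinearSeries ℝ ℝ ℝ} {x : ℝ}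
    {r : ENNReal} (h : HasFPowerSeriesOnBall f p x r) (n : ℕ) :
    iteratedDeriv n f x = (n.factorial : ℝ) * p.coeff n := by
  have h1 := h.factorial_smul (1 : ℝ) n
  rw [iteratedDeriv_eq_iteratedFDeriv, ← h1]
  rw [nsmul_eq_mul]
  rfl

lemma iteratedDeriv_mul_const' (n : ℕ) (g : ℝ → ℝ) (c : ℝ) :
    iteratedDeriv n (fun s => g s * c) = fun s => iteratedDeriv n g s * c := by
  induction n generalizing g with
  | zero => simp
  | succ k ih =>
    rw [iteratedDeriv_succ', deriv_mul_const_field', ih, ← iteratedDeriv_succ']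

lemma inner_iteratedDeriv' (α m x : ℝ) (k : ℕ) (t : ℝ) :
    iteratedDeriv (k+1) (fun s => m + Real.exp (-α * s) * x) t
      = (-α)^(k+1) * Real.exp (-α * t) * x := by
  have h1 : iteratedDeriv (k+1) (fun s => m + Real.exp (-α * s) * x)
      = iteratedDeriv (k+1) (fun s => Real.exp (-α * s) * x) := by
    rw [iteratedDeriv_succ', iteratedDeriv_succ']
    rw [deriv_const_add' (f := fun s => Real.exp (-α * s) * x) m]
  rw [h1, iteratedDeriv_mul_const', iteratedDeriv_exp_const_mul]

lemma inner_analyticAt' (α m x t : ℝ) :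
    AnalyticAt ℝ (fun s => m + Real.exp (-α * s) * x) t := by
  apply analyticAt_const.add
  exact ((analyticAt_const.mul analyticAt_id).rexp).mul analyticAt_const

lemma ratio_bound' {ρ ε a b E : ℝ} (hρ : 0 < ρ) (hε : 0 < ε) (ha : 0 ≤ a) (hb : 0 ≤ b)
    (hE : 0 < E) : E * (a + b) ≤ (E * (1 + ε * b / ρ) / ε) * (ρ + ε * a) := by
  rw [← mul_le_mul_iff_of_pos_right (show (0:ℝ) < ε * ρ from mul_pos hε hρ)]
  have h1 : E * (1 + ε * b / ρ) / ε * (ρ + ε * a) * (ε * ρ) = E * (ρ + ε * b) * (ρ + ε * a) := by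
    field_simp
  rw [h1]
  nlinarith [mul_nonneg hE.le (sq_nonneg ρ),
    mul_nonneg (mul_nonneg hE.le (mul_nonneg (sq_nonneg ε) ha)) hb]

lemma nu_analytic' (ν : ℝ → ℝ) (D ρ ε : ℝ)
    (hD : 0 < D) (hρ : 0 < ρ) (hε : 0 < ε)
    (hν : ContDiff ℝ (⊤ : ℕ∞) ν)
    (hνbd : ∀ y : ℝ, ∀ k : ℕ, 1 ≤ k →
      |iteratedDeriv k ν y| ≤ D * (k.factorial : ℝ) / (ρ + ε * |y|) ^ k) :
    AnalyticOnNhd ℝ ν univ := by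
  intro y _
  -- bound on derivatives uniform in the point
  have hb : ∀ z : ℝ, ∀ k : ℕ, 1 ≤ k → |iteratedDeriv k ν z| ≤ D * (k.factorial : ℝ) / ρ ^ k := by
    intro z k hk
    refine (hνbd z k hk).trans ?_
    apply div_le_div_of_nonneg_left (by positivity) (by positivity)
    exact pow_le_pow_left₀ hρ.le (by nlinarith [abs_nonneg z]) k
  set c : ℕ → ℝ := fun n => iteratedDeriv n ν y / (n.factorial : ℝ) with hc
  have hcb : ∀ n, |c n| ≤ max |ν y| D * (1 / ρ) ^ n := by
    intro n
    rcases Nat.eq_zero_or_pos n with rfl | hn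
    · simp [hc]
    · have hf : (0:ℝ) < n.factorial := by positivity
      rw [hc, abs_div, Nat.abs_cast, div_le_iff₀ hf]
      calc |iteratedDeriv n ν y| ≤ D * (n.factorial : ℝ) / ρ ^ n := hb y n hn
        _ ≤ max |ν y| D * (1 / ρ) ^ n * n.factorial := by
          rw [one_div_pow, one_div, div_eq_mul_inv, mul_right_comm]
          gcongr
          exact le_max_right _ _
  set p := FormalMultilinearSeries.ofScalars ℝ c with hp
  refine ⟨p, ENNReal.ofReal (ρ / 2), ?_⟩
  refine ⟨?_, by simp [hρ], ?_⟩
  · apply FormalMultilinearSeries.le_radius_of_bound (C := max |ν y| D)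
    intro n
    rw [FormalMultilinearSeries.ofScalars_norm, Real.norm_eq_abs]
    have h2 : (((ρ/2).toNNReal : NNReal) : ℝ) = ρ / 2 := Real.coe_toNNReal _ (by positivity)
    rw [h2]
    calc |c n| * (ρ / 2) ^ n ≤ max |ν y| D * (1 / ρ) ^ n * (ρ / 2) ^ n :=
          mul_le_mul_of_nonneg_right (hcb n) (by positivity)
      _ = max |ν y| D * (1 / 2) ^ n := by
          rw [mul_assoc, ← mul_pow]; congr 2; field_simp
      _ ≤ max |ν y| D * 1 := by
          apply mul_le_mul_of_nonneg_left _ (le_trans (abs_nonneg _) (le_max_left _ _))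
          exact pow_le_one₀ (by norm_num) (by norm_num)
      _ = max |ν y| D := mul_one _
  · intro h hh
    rw [Metric.eball_ofReal, Metric.mem_ball, dist_zero_right, Real.norm_eq_abs] at hh
    have happ : ∀ n, p n (fun _ => h) = c n * h ^ n := by
      intro n
      rw [hp, FormalMultilinearSeries.ofScalars_apply_eq, smul_eq_mul, mul_comm]
    simp only [happ]
    have hsum : Summable (fun n => c n * h ^ n) := by
      refine Summable.of_norm_bounded (g := fun n => max |ν y| D * (|h| / ρ) ^ n) ?_ ?_
      · apply Summable.mul_left
        apply summable_geometric_of_lt_one (by positivity)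
        rw [div_lt_one hρ]; linarith
      · intro n
        rw [Real.norm_eq_abs, abs_mul, abs_pow]
        calc |c n| * |h| ^ n ≤ max |ν y| D * (1 / ρ) ^ n * |h| ^ n :=
              mul_le_mul_of_nonneg_right (hcb n) (by positivity)
          _ = _ := by rw [div_pow, div_pow]; ring
    rcases eq_or_ne h 0 with rfl | hh0
    · have h0 : ∀ b, b ≠ 0 → c b * (0:ℝ) ^ b = 0 := fun b hb => by simp [hb]
      have h1 := hasSum_single (f := fun n => c n * (0:ℝ) ^ n) 0 h0
      simpa [hc] using h1
    rw [hsum.hasSum_iff_tendsto_nat]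
    rw [← Filter.tendsto_add_atTop_iff_nat 1, tendsto_iff_norm_sub_tendsto_zero]
    have hne : y ≠ y + h := by intro h'; apply hh0; linarith
    have hbound : ∀ n : ℕ, ‖∑ i ∈ Finset.range (n + 1), c i * h ^ i - ν (y + h)‖
        ≤ D * (|h| / ρ) ^ (n + 1) := by
      intro n
      have hT : ∑ i ∈ Finset.range (n + 1), c i * h ^ i
          = taylorWithinEval ν n (uIcc y (y + h)) y (y + h) := by
        rw [taylor_within_apply]
        apply Finset.sum_congr rfl
        intro k _
        rw [iteratedDerivWithin_eq_iteratedDeriv (uniqueDiffOn_uIcc hne)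
          (hν.contDiffAt.of_le (by exact_mod_cast le_top)) left_mem_uIcc]
        rw [hc, smul_eq_mul]
        ring
      have hcd : ContDiffOn ℝ (n + 1) ν (uIcc y (y + h)) :=
        (hν.of_le (by exact_mod_cast le_top)).contDiffOn
      obtain ⟨x', _, hx'⟩ := taylor_mean_remainder_lagrange_iteratedDeriv hne hcd
      rw [hT, norm_sub_rev, hx', Real.norm_eq_abs, abs_div, abs_mul, abs_pow, Nat.abs_cast]
      have hf : (0:ℝ) < ((n+1).factorial : ℝ) := by positivity
      rw [div_le_iff₀ hf, show y + h - y = h by ring]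
      calc |iteratedDeriv (n + 1) ν x'| * |h| ^ (n + 1)
          ≤ D * ((n+1).factorial : ℝ) / ρ ^ (n + 1) * |h| ^ (n + 1) :=
            mul_le_mul_of_nonneg_right (hb x' (n+1) (by omega)) (by positivity)
        _ = D * (|h| / ρ) ^ (n + 1) * ((n+1).factorial : ℝ) := by rw [div_pow]; ring
    refine squeeze_zero (fun n => norm_nonneg _) hbound ?_
    have hq : |h| / ρ < 1 := by rw [div_lt_one hρ]; linarith
    have := (tendsto_pow_atTop_nhds_zero_of_lt_one (by positivity) hq).const_mul D
    rw [mul_zero] at this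
    exact (Filter.tendsto_add_atTop_iff_nat 1).mpr this

/-- For `ν` smooth with `|ν^{(k)}(y)| ≤ D k!/(ρ+ε|y|)^k` and `ñ(t,x) = ν(m + e^{-αt}x)`,
the `t`-derivatives of `ñ` satisfy uniform bounds `sup_x |∂ᵏñ/∂tᵏ(t,x)| ≤ M k!/Lᵏ`
on `(0,1)`; in particular `t ↦ ñ(t,x)` is analytic on `(0,1)`. -/
theorem stmt_13 (ν : ℝ → ℝ) (D ρ ε α m : ℝ)
    (hD : 0 < D) (hρ : 0 < ρ) (hε : 0 < ε) (hα : 0 < α)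
    (hν : ContDiff ℝ (⊤ : ℕ∞) ν)
    (hνbd : ∀ y : ℝ, ∀ k : ℕ, 1 ≤ k →
      |iteratedDeriv k ν y| ≤ D * (k.factorial : ℝ) / (ρ + ε * |y|) ^ k) :
    (∃ M : ℝ, 0 < M ∧ ∃ L : ℝ, 0 < L ∧ ∀ k : ℕ, 1 ≤ k →
      ∀ t ∈ Ioo (0:ℝ) 1, ∀ x : ℝ,
        |iteratedDeriv k (fun s => ν (m + Real.exp (-α * s) * x)) t| ≤
          M * (k.factorial : ℝ) / L ^ k) ∧
    (∀ x : ℝ, AnalyticOnNhd ℝ (fun t => ν (m + Real.exp (-α * t) * x))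
      (Ioo (0:ℝ) 1)) := by
  have hνan : AnalyticOnNhd ℝ ν univ := nu_analytic' ν D ρ ε hD hρ hε hν hνbd
  set K : ℝ := Real.exp α * (1 + ε * |m| / ρ) / ε with hKdef
  have hK0 : 0 < K := by positivity
  set K' : ℝ := max K 1 with hK'def
  have hK'1 : (1:ℝ) ≤ K' := le_max_right _ _
  have hK'0 : 0 < K' := lt_of_lt_of_le one_pos hK'1
  set A : ℝ := 2 * α * K' with hAdef
  have hA0 : 0 < A := by positivity
  constructor
  · refine ⟨D, hD, A⁻¹, inv_pos.mpr hA0, ?_⟩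
    intro k hk t ht x
    set finner : ℝ → ℝ := fun s => m + Real.exp (-α * s) * x with hfinner
    set y : ℝ := finner t with hydef
    have hρy : 0 < ρ + ε * |y| := by positivity
    -- outer series
    obtain ⟨q, hqat⟩ := hνan y (mem_univ _)
    obtain ⟨rq, hq⟩ := hqat
    -- inner series
    obtain ⟨p, hpat⟩ := inner_analyticAt' α m x t
    obtain ⟨rp, hp⟩ := hpat
    have hcomp : HasFPowerSeriesAt (ν ∘ finner) (q.comp p) t :=
      HasFPowerSeriesAt.comp ⟨rq, hq⟩ ⟨rp, hp⟩
    obtain ⟨rc, hc⟩ := hcomp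
    have hid : iteratedDeriv k (fun s => ν (m + Real.exp (-α * s) * x)) t
        = (k.factorial : ℝ) * (q.comp p).coeff k := coeff_eq_iteratedDeriv' hc k
    -- bounds on q
    have hqbd : ∀ j : ℕ, 1 ≤ j → ‖q j‖ ≤ D / (ρ + ε * |y|) ^ j := by
      intro j hj
      have hcf := coeff_eq_iteratedDeriv' hq j
      have hb := hνbd y j hj
      rw [hcf, abs_mul, Nat.abs_cast] at hb
      rw [FormalMultilinearSeries.norm_apply_eq_norm_coef]
      have hj0 : (0:ℝ) < (j.factorial : ℝ) := by positivity
      rw [Real.norm_eq_abs]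
      have hb' : (j.factorial : ℝ) * |q.coeff j| ≤ (j.factorial : ℝ) * (D / (ρ + ε * |y|) ^ j) := by
        calc (j.factorial : ℝ) * |q.coeff j| ≤ D * (j.factorial : ℝ) / (ρ + ε * |y|) ^ j := hb
          _ = (j.factorial : ℝ) * (D / (ρ + ε * |y|) ^ j) := by ring
      exact le_of_mul_le_mul_left hb' hj0
    -- bounds on p
    have hpbd : ∀ j : ℕ, 1 ≤ j → ‖p j‖ ≤ α ^ j * |x| := by
      intro j hj
      obtain ⟨i, rfl⟩ : ∃ i, j = i + 1 := ⟨j - 1, (Nat.succ_pred_eq_of_pos hj).symm⟩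
      have hcf := coeff_eq_iteratedDeriv' hp (i + 1)
      rw [inner_iteratedDeriv' α m x i t] at hcf
      have hfac : (0:ℝ) < ((i+1).factorial : ℝ) := by positivity
      have hfac1 : (1:ℝ) ≤ ((i+1).factorial : ℝ) := by
        exact_mod_cast Nat.one_le_iff_ne_zero.mpr (Nat.factorial_ne_zero _)
      have hcoeff : p.coeff (i+1) = (-α)^(i+1) * Real.exp (-α * t) * x / ((i+1).factorial : ℝ) := by
        rw [eq_div_iff (ne_of_gt hfac), mul_comm]
        exact hcf.symm
      rw [FormalMultilinearSeries.norm_apply_eq_norm_coef, Real.norm_eq_abs, hcoeff]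
      rw [abs_div, abs_mul, abs_mul, abs_pow, abs_neg, abs_of_pos hα, Nat.abs_cast,
        abs_of_pos (Real.exp_pos _)]
      have hexp : Real.exp (-α * t) ≤ 1 := by
        rw [Real.exp_le_one_iff]
        nlinarith [ht.1]
      calc α ^ (i+1) * Real.exp (-α * t) * |x| / ((i+1).factorial : ℝ)
          ≤ α ^ (i+1) * Real.exp (-α * t) * |x| :=
            div_le_self (by positivity) hfac1
        _ = Real.exp (-α * t) * (α ^ (i+1) * |x|) := by ring
        _ ≤ 1 * (α ^ (i+1) * |x|) := mul_le_mul_of_nonneg_right hexp (by positivity)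
        _ = α ^ (i+1) * |x| := one_mul _
    -- the key ratio bound
    have hxK : |x| ≤ K' * (ρ + ε * |y|) := by
      have hym : y - m = Real.exp (-α * t) * x := by
        rw [hydef, hfinner]
        ring
      have hyx : Real.exp (-α * t) * |x| ≤ |y| + |m| := by
        calc Real.exp (-α * t) * |x| = |y - m| := by
              rw [hym, abs_mul, abs_of_pos (Real.exp_pos _)]
          _ ≤ |y| + |m| := abs_sub y m
      have hex : |x| ≤ Real.exp α * (|y| + |m|) := by
        have hXeq : |x| = Real.exp (α * t) * (Real.exp (-α * t) * |x|) := by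
          rw [← mul_assoc, ← Real.exp_add]
          norm_num
        have he1 : Real.exp (α * t) ≤ Real.exp α := by
          apply Real.exp_le_exp.mpr
          nlinarith [ht.1, ht.2]
        calc |x| = Real.exp (α * t) * (Real.exp (-α * t) * |x|) := hXeq
          _ ≤ Real.exp α * (|y| + |m|) :=
              mul_le_mul he1 hyx (by positivity) (Real.exp_pos _).le
      calc |x| ≤ Real.exp α * (|y| + |m|) := hex
        _ ≤ (Real.exp α * (1 + ε * |m| / ρ) / ε) * (ρ + ε * |y|) :=
            ratio_bound' hρ hε (abs_nonneg y) (abs_nonneg m) (Real.exp_pos α)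
        _ = K * (ρ + ε * |y|) := by rw [hKdef]
        _ ≤ K' * (ρ + ε * |y|) := mul_le_mul_of_nonneg_right (le_max_left _ _) hρy.le
    -- bound each composition term
    have hterm : ∀ c : Composition k, ‖q.compAlongComposition p c‖ ≤ D * α ^ k * K' ^ k := by
      intro c
      have hlen1 : 1 ≤ c.length := c.length_pos_of_pos (by omega)
      have hlenk : c.length ≤ k := c.length_le
      have h2 : ∏ i, ‖p (c.blocksFun i)‖ ≤ ∏ i : Fin c.length, (α ^ (c.blocksFun i) * |x|) :=
        Finset.prod_le_prod (fun i _ => norm_nonneg _) (fun i _ => hpbd _ (c.one_le_blocksFun i))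
      have h3 : ∏ i : Fin c.length, (α ^ (c.blocksFun i) * |x|) = α ^ k * |x| ^ c.length := by
        rw [Finset.prod_mul_distrib, Finset.prod_pow_eq_pow_sum, c.sum_blocksFun,
          Finset.prod_const]
        simp
      calc ‖q.compAlongComposition p c‖ ≤ ‖q c.length‖ * ∏ i, ‖p (c.blocksFun i)‖ :=
            q.compAlongComposition_norm p c
        _ ≤ (D / (ρ + ε * |y|) ^ c.length) * (α ^ k * |x| ^ c.length) := by
            apply mul_le_mul (hqbd _ hlen1) (h2.trans (le_of_eq h3))
              (Finset.prod_nonneg (fun i _ => norm_nonneg _)) (by positivity)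
        _ = D * α ^ k * (|x| / (ρ + ε * |y|)) ^ c.length := by
            rw [div_pow]
            ring
        _ ≤ D * α ^ k * K' ^ c.length := by
            have hdiv : |x| / (ρ + ε * |y|) ≤ K' := (div_le_iff₀ hρy).mpr hxK
            have := pow_le_pow_left₀ (by positivity) hdiv c.length
            exact mul_le_mul_of_nonneg_left this (by positivity)
        _ ≤ D * α ^ k * K' ^ k :=
            mul_le_mul_of_nonneg_left (pow_le_pow_right₀ hK'1 hlenk) (by positivity)
    have hcard : (Fintype.card (Composition k) : ℝ) ≤ 2 ^ k := by
      have h1 : Fintype.card (Composition k) = 2 ^ (k - 1) := composition_card k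
      have h2 : (2:ℕ) ^ (k - 1) ≤ 2 ^ k := Nat.pow_le_pow_right (by norm_num) (Nat.sub_le k 1)
      calc (Fintype.card (Composition k) : ℝ) = ((2:ℕ) ^ (k - 1) : ℕ) := by exact_mod_cast h1
        _ ≤ ((2:ℕ) ^ k : ℕ) := by exact_mod_cast h2
        _ = 2 ^ k := by push_cast; ring
    have hsum : ‖(q.comp p) k‖ ≤ 2 ^ k * (D * α ^ k * K' ^ k) := by
      have heq : (q.comp p) k = ∑ c : Composition k, q.compAlongComposition p c := rfl
      rw [heq]
      calc ‖∑ c : Composition k, q.compAlongComposition p c‖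
          ≤ ∑ c : Composition k, ‖q.compAlongComposition p c‖ := norm_sum_le _ _
        _ ≤ ∑ _c : Composition k, (D * α ^ k * K' ^ k) :=
            Finset.sum_le_sum (fun c _ => hterm c)
        _ = (Fintype.card (Composition k) : ℝ) * (D * α ^ k * K' ^ k) := by
            rw [Finset.sum_const, Finset.card_univ, nsmul_eq_mul]
        _ ≤ 2 ^ k * (D * α ^ k * K' ^ k) :=
            mul_le_mul_of_nonneg_right hcard (by positivity)
    -- conclude
    rw [hid, abs_mul, Nat.abs_cast]
    have hco : |(q.comp p).coeff k| ≤ 2 ^ k * (D * α ^ k * K' ^ k) := by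
      rw [← Real.norm_eq_abs, ← FormalMultilinearSeries.norm_apply_eq_norm_coef]
      exact hsum
    calc (k.factorial : ℝ) * |(q.comp p).coeff k|
        ≤ (k.factorial : ℝ) * (2 ^ k * (D * α ^ k * K' ^ k)) :=
          mul_le_mul_of_nonneg_left hco (by positivity)
      _ = D * (k.factorial : ℝ) * A ^ k := by
          rw [hAdef, mul_pow, mul_pow]
          ring
      _ = D * (k.factorial : ℝ) / (A⁻¹) ^ k := by
          rw [inv_pow, div_inv_eq_mul]
  · intro x z hz
    exact (hνan _ (mem_univ _)).comp (inner_analyticAt' α m x z)
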